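/- arXiv:1311.6551 — 2 statements merged into one kernel-verified Lean document; each statement's English description precedes it below -/
import Mathlib

section
/- The monomer-dimer partition function on the complete graph K_N with monomer weight x and uniform dimer weight 1/N equals (i/√N)^N · H_N(−i·x·√N), where H_N is the N-th probabilistic Hermite polynomial. -/
/-!
Splitting the matchings of `S` according to whether a vertex `v ∈ S` is left unmatched or
matched to some `u` gives `Z(S) = x_v Z(S \ v) + ∑_u w(vu) Z(S \ {u, v})`. On `K_N` with
constant weights `Z(S)` thus depends only on `n = |S|`, through
`z₀ = 1`, `z₁ = x`, `z_{n+2} = x z_{n+1} + (n + 1)/N z_n`.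
The Hermite recurrence `H_{n+2}(y) = y H_{n+1}(y) - (n + 1) H_n(y)` shows that
`aⁿ H_n(y)` satisfies `z_{n+2} = a y z_{n+1} - (n + 1) a² z_n`; for `a = i/√N` and
`y = x/a = -i x √N` this is the same recurrence with the same initial values.
-/

open Classical in
/-- Monomer-dimer partition function of the graph `G` restricted to the vertex set `S`. -/
noncomputable def mdZ {V : Type*} [Fintype V] [DecidableEq V] (G : SimpleGraph V)
    (S : Finset V) (x : V → ℝ) (w : Sym2 V → ℝ) : ℝ :=
  ∑ M ∈ Finset.univ.filter (fun M : Finset (Sym2 V) =>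
      (∀ e ∈ M, e ∈ G.edgeSet) ∧ (∀ e ∈ M, ∀ v ∈ e, v ∈ S) ∧
      (M : Set (Sym2 V)).Pairwise (fun e f => ∀ v, v ∈ e → v ∉ f)),
    (∏ e ∈ M, w e) * ∏ v ∈ S.filter (fun v => ∀ e ∈ M, v ∉ e), x v

open Finset Polynomial

section MonomerDimer

variable {V : Type*}

def IsMatchingWithin (G : SimpleGraph V) (S : Finset V) (M : Finset (Sym2 V)) : Prop :=
  (∀ e ∈ M, e ∈ G.edgeSet) ∧ (∀ e ∈ M, ∀ v ∈ e, v ∈ S) ∧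
    (M : Set (Sym2 V)).Pairwise (fun e f => ∀ v, v ∈ e → v ∉ f)

open Classical in
noncomputable def matchingsWithin [Fintype V] (G : SimpleGraph V) (S : Finset V) :
    Finset (Finset (Sym2 V)) :=
  univ.filter (IsMatchingWithin G S)

def unmatched [DecidableEq V] (S : Finset V) (M : Finset (Sym2 V)) : Finset V :=
  S.filter (fun v => ∀ e ∈ M, v ∉ e)

variable {G : SimpleGraph V} {S : Finset V} {M : Finset (Sym2 V)} {u v : V}

@[simp]
lemma mem_matchingsWithin [Fintype V] :
    M ∈ matchingsWithin G S ↔ IsMatchingWithin G S M := by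
  simp [matchingsWithin]

lemma matchingsWithin_empty [Fintype V] : matchingsWithin G ∅ = {∅} := by
  ext M
  simp only [mem_matchingsWithin, mem_singleton, IsMatchingWithin, notMem_empty]
  constructor
  · rintro ⟨-, hS, -⟩
    exact eq_empty_of_forall_notMem fun e he => e.ind (fun a _ h => h a (by simp)) (hS e he)
  · rintro rfl
    simp

lemma IsMatchingWithin.notMem_of_mem {a : V} {e : Sym2 V} (hM : IsMatchingWithin G S M)
    (ha : a ∉ S) (he : e ∈ M) : a ∉ e :=
  fun hae => ha (hM.2.1 e he a hae)

variable [DecidableEq V]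

lemma isMatchingWithin_erase_iff :
    IsMatchingWithin G (S.erase v) M ↔ IsMatchingWithin G S M ∧ ∀ e ∈ M, v ∉ e := by
  simp only [IsMatchingWithin, mem_erase]
  constructor
  · rintro ⟨hG, hS, hM⟩
    exact ⟨⟨hG, fun e he a ha => (hS e he a ha).2, hM⟩,
      fun e he hv => (hS e he v hv).1 rfl⟩
  · rintro ⟨⟨hG, hS, hM⟩, hv⟩
    exact ⟨hG, fun e he a ha => ⟨fun hav => hv e he (hav ▸ ha), hS e he a ha⟩, hM⟩

lemma isMatchingWithin_insert_iff (h : s(v, u) ∉ M) :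
    IsMatchingWithin G S (insert s(v, u) M) ↔
      G.Adj v u ∧ v ∈ S ∧ u ∈ S ∧ IsMatchingWithin G ((S.erase v).erase u) M := by
  simp only [IsMatchingWithin, forall_mem_insert, coe_insert,
    Set.pairwise_insert_of_notMem (mem_coe.not.2 h), SimpleGraph.mem_edgeSet,
    Sym2.mem_iff, forall_eq_or_imp, forall_eq, mem_erase, mem_coe]
  grind

lemma unmatched_erase : unmatched (S.erase v) M = (unmatched S M).erase v :=
  filter_erase _ _ _

lemma unmatched_insert_mk :
    unmatched S (insert s(v, u) M) = unmatched ((S.erase v).erase u) M := by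
  ext a
  simp only [unmatched, mem_filter, forall_mem_insert, Sym2.mem_iff, mem_erase]
  tauto

lemma insert_mk_eq_insert_mk_iff {u' : V} {M' : Finset (Sym2 V)} (hM : ∀ e ∈ M, v ∉ e)
    (hM' : ∀ e ∈ M', v ∉ e) :
    insert s(v, u) M = insert s(v, u') M' ↔ u = u' ∧ M = M' := by
  refine ⟨fun h => ?_, by rintro ⟨rfl, rfl⟩; rfl⟩
  have hu : u = u' := by
    have hmem : s(v, u') ∈ insert s(v, u) M := h ▸ mem_insert_self _ _
    rcases mem_insert.1 hmem with heq | hmem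
    · exact (Sym2.congr_right.1 heq).symm
    · exact absurd (Sym2.mem_mk_left v u') (hM _ hmem)
  subst hu
  refine ⟨rfl, ?_⟩
  rw [← erase_insert fun h => hM _ h (Sym2.mem_mk_left v u), h,
    erase_insert fun h => hM' _ h (Sym2.mem_mk_left v u)]

variable [Fintype V]

lemma mdZ_eq_sum_matchingsWithin (x : V → ℝ) (w : Sym2 V → ℝ) :
    mdZ G S x w =
      ∑ M ∈ matchingsWithin G S, (∏ e ∈ M, w e) * ∏ v ∈ unmatched S M, x v := by
  unfold mdZ matchingsWithin unmatched IsMatchingWithin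
  congr!

lemma mdZ_empty (x : V → ℝ) (w : Sym2 V → ℝ) : mdZ G ∅ x w = 1 := by
  simp [mdZ_eq_sum_matchingsWithin, matchingsWithin_empty, unmatched]

lemma filter_matchingsWithin_unmatched (v : V) :
    (matchingsWithin G S).filter (fun M => ∀ e ∈ M, v ∉ e) =
      matchingsWithin G (S.erase v) := by
  ext M
  simp [isMatchingWithin_erase_iff]

lemma filter_matchingsWithin_matched [DecidableRel G.Adj] (hv : v ∈ S) :
    (matchingsWithin G S).filter (fun M => ¬ ∀ e ∈ M, v ∉ e) =
      ((S.erase v).filter (G.Adj v)).biUnion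
        fun u => (matchingsWithin G ((S.erase v).erase u)).image (insert s(v, u)) := by
  ext M
  simp only [mem_filter, mem_matchingsWithin, mem_biUnion, mem_image, mem_erase]
  constructor
  · rintro ⟨hM, hcov⟩
    obtain ⟨e, he, hve⟩ : ∃ e ∈ M, v ∈ e := by simpa using hcov
    obtain ⟨u, rfl⟩ := Sym2.mem_iff_exists.1 hve
    have hnotMem : s(v, u) ∉ M.erase s(v, u) := notMem_erase _ _
    obtain ⟨hadj, -, hu, hM'⟩ :=
      (isMatchingWithin_insert_iff hnotMem).1 (by rwa [insert_erase he])
    exact ⟨u, ⟨⟨hadj.ne', hu⟩, hadj⟩, _, hM', insert_erase he⟩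
  · rintro ⟨u, ⟨⟨-, hu⟩, hadj⟩, M', hM', rfl⟩
    have hnotMem : s(v, u) ∉ M' := fun h => hM'.notMem_of_mem (by simp) h (Sym2.mem_mk_left v u)
    exact ⟨(isMatchingWithin_insert_iff hnotMem).2 ⟨hadj, hv, hu, hM'⟩,
      fun h => h _ (mem_insert_self _ _) (Sym2.mem_mk_left v u)⟩

theorem mdZ_eq_of_mem [DecidableRel G.Adj] (x : V → ℝ) (w : Sym2 V → ℝ) (hv : v ∈ S) :
    mdZ G S x w = x v * mdZ G (S.erase v) x w +
      ∑ u ∈ (S.erase v).filter (G.Adj v), w s(v, u) * mdZ G ((S.erase v).erase u) x w := by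
  have avoids {u : V} {M : Finset (Sym2 V)} (hM : M ∈ matchingsWithin G ((S.erase v).erase u)) :
      ∀ e ∈ M, v ∉ e := fun _ => (mem_matchingsWithin.1 hM).notMem_of_mem (by simp)
  rw [mdZ_eq_sum_matchingsWithin,
    ← sum_filter_add_sum_filter_not _ (fun M => ∀ e ∈ M, v ∉ e), filter_matchingsWithin_unmatched,
    filter_matchingsWithin_matched hv, sum_biUnion]
  · congr 1
    · rw [mdZ_eq_sum_matchingsWithin, mul_sum]
      refine sum_congr rfl fun M hM => ?_
      have hvM : v ∈ unmatched S M := by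
        simpa [unmatched, hv] using
          fun e => (mem_matchingsWithin.1 hM).notMem_of_mem (notMem_erase v S)
      rw [unmatched_erase, mul_left_comm, mul_prod_erase _ _ hvM]
    · refine sum_congr rfl fun u hu => ?_
      rw [sum_image, mdZ_eq_sum_matchingsWithin, mul_sum]
      · refine sum_congr rfl fun M hM => ?_
        rw [prod_insert fun h => avoids hM _ h (Sym2.mem_mk_left v u), unmatched_insert_mk,
          mul_assoc]
      · intro M₁ hM₁ M₂ hM₂ h
        exact ((insert_mk_eq_insert_mk_iff (avoids hM₁) (avoids hM₂)).1 h).2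
  · intro u₁ _ u₂ _ hne
    refine disjoint_left.2 fun M hmem₁ hmem₂ => hne ?_
    obtain ⟨M₁, hM₁, rfl⟩ := mem_image.1 hmem₁
    obtain ⟨M₂, hM₂, h⟩ := mem_image.1 hmem₂
    exact ((insert_mk_eq_insert_mk_iff (avoids hM₂) (avoids hM₁)).1 h).1.symm

theorem mdZ_top_eq_of_mem (c w : ℝ) (hv : v ∈ S) :
    mdZ ⊤ S (fun _ => c) (fun _ => w) = c * mdZ ⊤ (S.erase v) (fun _ => c) (fun _ => w) +
      w * ∑ u ∈ S.erase v, mdZ ⊤ ((S.erase v).erase u) (fun _ => c) (fun _ => w) := by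
  rw [mdZ_eq_of_mem _ _ hv, mul_sum,
    filter_true_of_mem (p := (⊤ : SimpleGraph V).Adj v) fun u hu => (ne_of_mem_erase hu).symm]

theorem algebraMap_mdZ_top {R : Type*} [CommRing R] [Algebra ℝ R] (c w : ℝ) (f : ℕ → R)
    (h0 : f 0 = 1) (h1 : f 1 = algebraMap ℝ R c)
    (hf : ∀ n, f (n + 2) = algebraMap ℝ R c * f (n + 1) + (n + 1) * algebraMap ℝ R w * f n)
    (S : Finset V) : algebraMap ℝ R (mdZ ⊤ S (fun _ => c) (fun _ => w)) = f #S := by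
  induction S using Finset.strongInduction with
  | H S ih =>
    rcases S.eq_empty_or_nonempty with rfl | ⟨v, hv⟩
    · simp [mdZ_empty, h0]
    have hsub {u : V} (hu : u ∈ S.erase v) : (S.erase v).erase u ⊂ S :=
      (erase_subset u _).trans_ssubset (erase_ssubset hv)
    rw [mdZ_top_eq_of_mem c w hv, map_add, map_mul, map_mul, ih _ (erase_ssubset hv), map_sum,
      sum_congr rfl fun u hu => by rw [ih _ (hsub hu), card_erase_of_mem hu], sum_const,
      nsmul_eq_mul, ← card_erase_add_one hv]
    rcases #(S.erase v) with _ | n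
    · simp [h0, h1]
    · rw [hf]
      push_cast
      ring

end MonomerDimer

namespace Polynomial

theorem derivative_hermite_succ (n : ℕ) :
    derivative (hermite (n + 1)) = ((n : ℤ[X]) + 1) * hermite n := by
  induction n with
  | zero => simp
  | succ n ih =>
    rw [hermite_succ (n + 1), derivative_sub, derivative_mul, derivative_X, ih, derivative_mul,
      hermite_succ n]
    simp only [derivative_add, derivative_one, derivative_natCast]
    push_cast
    ring

theorem hermite_add_two (n : ℕ) :
    hermite (n + 2) = X * hermite (n + 1) - ((n : ℤ[X]) + 1) * hermite n := by
  rw [hermite_succ (n + 1), derivative_hermite_succ]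

theorem aeval_hermite_add_two {A : Type*} [CommRing A] (y : A) (n : ℕ) :
    aeval y (hermite (n + 2)) = y * aeval y (hermite (n + 1)) - (n + 1) * aeval y (hermite n) := by
  rw [hermite_add_two]
  simp

end Polynomial

/-- `Z_N(x) = (i/√N)^N · H_N(−i·x·√N)`, with `H_N` the `N`-th
probabilistic Hermite polynomial. -/
theorem stmt4 (N : ℕ) (hN : 0 < N) (x : ℝ) :
    (mdZ (⊤ : SimpleGraph (Fin N)) Finset.univ (fun _ => x) (fun _ => 1 / (N : ℝ)) : ℂ) =
      (Complex.I / (Real.sqrt N : ℂ)) ^ N *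
        Polynomial.aeval (-Complex.I * (x : ℂ) * (Real.sqrt N : ℂ)) (Polynomial.hermite N) := by
  set a : ℂ := Complex.I / (Real.sqrt N : ℂ)
  set y : ℂ := -Complex.I * (x : ℂ) * (Real.sqrt N : ℂ)
  have hsqrt : (Real.sqrt N : ℂ) ≠ 0 := by
    exact_mod_cast (Real.sqrt_pos.2 (Nat.cast_pos.2 hN)).ne'
  have hay : a * y = x := by
    simp only [a, y]
    field_simp
    rw [Complex.I_sq]
    ring
  have ha2 : a ^ 2 = -(1 / N) := by
    rw [div_pow, Complex.I_sq, ← Complex.ofReal_pow, Real.sq_sqrt (Nat.cast_nonneg N)]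
    simp [neg_div]
  clear_value a y
  have hrec (n : ℕ) : a ^ (n + 2) * aeval y (hermite (n + 2)) =
      x * (a ^ (n + 1) * aeval y (hermite (n + 1))) +
        (n + 1) * (1 / N) * (a ^ n * aeval y (hermite n)) := by
    rw [aeval_hermite_add_two]
    linear_combination a ^ (n + 1) * aeval y (hermite (n + 1)) * hay -
      (n + 1) * a ^ n * aeval y (hermite n) * ha2
  simpa using algebraMap_mdZ_top x (1 / N) (fun n => a ^ n * aeval y (hermite n)) (by simp)
    (by simp [hay]) (fun n => by simpa [mul_assoc] using hrec n) (univ : Finset (Fin N))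
end

section
/- For every x > 0, the normalized pressure (1/N)·log Z_N(x) of the mean-field monomer-dimer model converges as N → ∞ to p(x) = f(x)(1 − log f(x) − log 2) + g(x)(1 − log g(x) + log x) − 1, where f(x) = (2 + x² − √(x⁴+4x²))/4 and g(x) = 1 − 2f(x). -/
/-- Mean-field monomer-dimer partition function (explicit expansion). -/
noncomputable def mfZ (N : ℕ) (x : ℝ) : ℝ :=
  ∑ d ∈ Finset.range (N / 2 + 1),
    (N.factorial : ℝ) / (d.factorial * (N - 2 * d).factorial * (2 * N) ^ d)
      * x ^ (N - 2 * d)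

noncomputable def fMD (x : ℝ) : ℝ := (2 + x ^ 2 - Real.sqrt (x ^ 4 + 4 * x ^ 2)) / 4

noncomputable def gMD (x : ℝ) : ℝ := 1 - 2 * fMD x

/-- Limiting pressure of the mean-field monomer-dimer model. -/
noncomputable def pMD (x : ℝ) : ℝ :=
  fMD x * (1 - Real.log (fMD x) - Real.log 2)
    + gMD x * (1 - Real.log (gMD x) + Real.log x) - 1

/-! By Stirling's formula the `d`-th term of `mfZ N x` is `exp (N S(d/N) + O(log N))`, where
`S = mdTrialPressure x`. There are at most `N` terms, so `(1/N) log Z_N(x)` lies between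
`S(⌊f N⌋/N) - O(log N / N)` and `max S + O(log N / N)`, with `f = fMD x`. Gibbs' inequality
`-a log a ≤ b - a - a log b` at `b = f` and `b = 1 - 2f` shows that `S ≤ S(f) = p(x)` on
`[0, 1/2]`, and `S` is continuous, so both bounds tend to `p(x)`. -/

open Real Filter Topology Finset

lemma mul_negMulLog_div (a : ℝ) {b : ℝ} (hb : b ≠ 0) :
    b * negMulLog (a / b) = negMulLog a + a * log b := by
  rw [div_eq_mul_inv, negMulLog_mul]
  simp only [negMulLog, log_inv]
  field_simp

lemma negMulLog_le_sub_sub_mul_log {a b : ℝ} (ha : 0 ≤ a) (hb : 0 < b) :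
    negMulLog a ≤ b - a - a * log b := by
  have h := mul_le_mul_of_nonneg_left (negMulLog_le_one_sub_self (div_nonneg ha hb.le)) hb.le
  rw [mul_negMulLog_div a hb.ne', mul_one_sub, mul_div_cancel₀ a hb.ne'] at h
  linarith

lemma tendsto_one_add_log_div_atTop :
    Tendsto (fun N : ℕ => (1 + log N) / N) atTop (𝓝 0) := by
  have hlog := (tendsto_pow_log_div_mul_add_atTop 1 0 1 one_ne_zero).comp
    tendsto_natCast_atTop_atTop
  simpa [add_div] using (tendsto_const_div_atTop_nhds_zero_nat 1).add hlog

lemma log_natCast_le_log_natCast {m n : ℕ} (h : m ≤ n) : log m ≤ log n := by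
  rcases m.eq_zero_or_pos with rfl | hm
  · simpa using log_natCast_nonneg n
  · exact log_le_log (by exact_mod_cast hm) (by exact_mod_cast h)

noncomputable def logFactorialRemainder (n : ℕ) : ℝ := log n.factorial - (n * log n - n)

lemma logFactorialRemainder_nonneg (n : ℕ) : 0 ≤ logFactorialRemainder n := by
  rcases eq_or_ne n 0 with rfl | hn
  · simp [logFactorialRemainder]
  have h := Stirling.le_log_factorial_stirling hn
  have h2π : 0 ≤ log (2 * π) := log_nonneg (by linarith [pi_gt_three])
  unfold logFactorialRemainder
  linarith [log_natCast_nonneg n]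

lemma logFactorialRemainder_le (n : ℕ) : logFactorialRemainder n ≤ 1 + log n := by
  rcases n with _ | k
  · simp [logFactorialRemainder]
  have hn' : ((k + 1 : ℕ) : ℝ) ≠ 0 := by positivity
  -- the Stirling sequence decreases from `stirlingSeq 1 = e / √2`
  have hlog := log_le_log (Stirling.stirlingSeq'_pos k)
    (Stirling.stirlingSeq'_antitone (Nat.zero_le k))
  simp only [Function.comp_apply, Nat.succ_eq_add_one, zero_add] at hlog
  rw [Stirling.log_stirlingSeq_formula, Stirling.stirlingSeq_one, log_div (exp_ne_zero 1)
    (by positivity), log_exp, log_sqrt zero_le_two, log_mul two_ne_zero hn',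
    log_div hn' (exp_ne_zero 1), log_exp] at hlog
  unfold logFactorialRemainder
  linarith [log_natCast_nonneg (k + 1)]

lemma fMD_pos (x : ℝ) : 0 < fMD x := by
  have h : √(x ^ 4 + 4 * x ^ 2) < 2 + x ^ 2 := by
    rw [sqrt_lt' (by positivity)]
    nlinarith
  unfold fMD
  linarith

lemma gMD_pos {x : ℝ} (hx : x ≠ 0) : 0 < gMD x := by
  have h : x ^ 2 < √(x ^ 4 + 4 * x ^ 2) := by
    rw [lt_sqrt (by positivity)]
    linarith [sq_pos_of_ne_zero hx]
  unfold gMD fMD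
  linarith

/-- `fMD x` is the root in `(0, 1/2)` of `(1 - 2f)² = 2 f x²`, the stationarity condition of
`mdTrialPressure x`. -/
lemma gMD_sq (x : ℝ) : gMD x ^ 2 = 2 * fMD x * x ^ 2 := by
  have hs : √(x ^ 4 + 4 * x ^ 2) ^ 2 = x ^ 4 + 4 * x ^ 2 := sq_sqrt (by positivity)
  unfold gMD fMD
  linear_combination hs / 4

lemma two_mul_log_gMD {x : ℝ} (hx : x ≠ 0) :
    2 * log (gMD x) = log 2 + log (fMD x) + 2 * log x := by
  have h := congrArg log (gMD_sq x)
  rw [log_pow, log_mul (by linarith [fMD_pos x]) (pow_ne_zero 2 hx),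
    log_mul two_ne_zero (fMD_pos x).ne', log_pow] at h
  push_cast at h
  linarith

/-- The exponential rate `(1/N) log` of the `d`-th term of `mfZ N x` at dimer density `t = d/N`. -/
lemma two_mul_floor_fMD_mul_le {x : ℝ} (hx : x ≠ 0) (N : ℕ) :
    2 * ⌊fMD x * N⌋₊ ≤ N := by
  have hfloor := Nat.floor_le (mul_nonneg (fMD_pos x).le N.cast_nonneg)
  have hg := gMD_pos hx
  unfold gMD at hg
  exact_mod_cast (by nlinarith : (2 * ⌊fMD x * N⌋₊ : ℝ) ≤ N)

noncomputable def mdTrialPressure (x t : ℝ) : ℝ :=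
  negMulLog t + negMulLog (1 - 2 * t) - t * (1 + log 2) + (1 - 2 * t) * log x

lemma continuous_mdTrialPressure (x : ℝ) : Continuous (mdTrialPressure x) := by
  unfold mdTrialPressure
  fun_prop

lemma mdTrialPressure_fMD (x : ℝ) : mdTrialPressure x (fMD x) = pMD x := by
  simp only [mdTrialPressure, pMD, gMD, negMulLog]
  ring

/-- Gibbs' inequality at `b = fMD x` and `b = gMD x`; the resulting bound is affine in `t` with
slope zero by `two_mul_log_gMD`. -/
lemma mdTrialPressure_le_pMD {x t : ℝ} (hx : 0 < x) (ht₀ : 0 ≤ t) (ht₁ : 2 * t ≤ 1) :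
    mdTrialPressure x t ≤ pMD x := by
  have hf := negMulLog_le_sub_sub_mul_log ht₀ (fMD_pos x)
  have hg := negMulLog_le_sub_sub_mul_log (sub_nonneg.2 ht₁) (gMD_pos hx.ne')
  have hlog := two_mul_log_gMD hx.ne'
  simp only [mdTrialPressure, pMD, gMD] at hf hg hlog ⊢
  linear_combination hf + hg + (t - fMD x) * hlog

noncomputable def mfTerm (N d : ℕ) (x : ℝ) : ℝ :=
  (N.factorial : ℝ) / (d.factorial * (N - 2 * d).factorial * (2 * N) ^ d) * x ^ (N - 2 * d)

lemma mfZ_eq_sum_mfTerm (N : ℕ) (x : ℝ) :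
    mfZ N x = ∑ d ∈ range (N / 2 + 1), mfTerm N d x := rfl

lemma mfTerm_pos {N : ℕ} {x : ℝ} (hN : 0 < N) (hx : 0 < x) (d : ℕ) : 0 < mfTerm N d x := by
  unfold mfTerm
  positivity

lemma mfZ_pos {N : ℕ} {x : ℝ} (hN : 0 < N) (hx : 0 < x) : 0 < mfZ N x :=
  sum_pos (fun d _ => mfTerm_pos hN hx d) nonempty_range_add_one

lemma log_mfTerm {N d : ℕ} {x : ℝ} (hN : 0 < N) (hd : 2 * d ≤ N) (hx : x ≠ 0) :
    log (mfTerm N d x) = N * mdTrialPressure x (d / N) + logFactorialRemainder N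
      - logFactorialRemainder d - logFactorialRemainder (N - 2 * d) := by
  obtain ⟨M, rfl⟩ := Nat.exists_eq_add_of_le hd
  rw [Nat.add_sub_cancel_left]
  have hN' : ((2 * d + M : ℕ) : ℝ) ≠ 0 := by positivity
  have hM : 1 - 2 * ((d : ℝ) / (2 * d + M : ℕ)) = M / (2 * d + M : ℕ) := by
    field_simp
    push_cast
    ring
  have hscale : (2 * d + M : ℕ) * mdTrialPressure x (d / (2 * d + M : ℕ)) =
      negMulLog d + negMulLog M + (d + M) * log (2 * d + M : ℕ) - d * (1 + log 2)
        + M * log x := by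
    rw [mdTrialPressure, hM, mul_add, mul_sub, mul_add, mul_negMulLog_div _ hN',
      mul_negMulLog_div _ hN']
    field_simp
    push_cast
    ring
  rw [hscale, mfTerm, Nat.add_sub_cancel_left, log_mul (by positivity) (pow_ne_zero _ hx),
    log_div (by positivity) (by positivity), log_mul (by positivity) (by positivity),
    log_mul (by positivity) (by positivity), log_pow, log_pow, log_mul two_ne_zero hN']
  simp only [logFactorialRemainder, negMulLog]
  push_cast
  ring

lemma log_mfTerm_le {N d : ℕ} {x : ℝ} (hN : 0 < N) (hd : 2 * d ≤ N) (hx : 0 < x) :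
    log (mfTerm N d x) ≤ N * pMD x + (1 + log N) := by
  have hS := mdTrialPressure_le_pMD hx (by positivity) (show 2 * ((d : ℝ) / N) ≤ 1 by
    rw [mul_div_assoc', div_le_one (by positivity)]
    exact_mod_cast hd)
  rw [log_mfTerm hN hd hx.ne']
  linarith [mul_le_mul_of_nonneg_left hS (Nat.cast_nonneg N), logFactorialRemainder_le N,
    logFactorialRemainder_nonneg d, logFactorialRemainder_nonneg (N - 2 * d)]

lemma log_mfZ_le {N : ℕ} {x : ℝ} (hN : 0 < N) (hx : 0 < x) :
    log (mfZ N x) ≤ N * pMD x + 2 * (1 + log N) := by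
  have hterm : ∀ d ∈ range (N / 2 + 1), mfTerm N d x ≤ exp (N * pMD x + (1 + log N)) := by
    intro d hd
    rw [← exp_log (mfTerm_pos hN hx d), exp_le_exp]
    exact log_mfTerm_le hN (by rw [mem_range] at hd; omega) hx
  have hcard : ((N / 2 + 1 : ℕ) : ℝ) ≤ N := by exact_mod_cast (by omega : N / 2 + 1 ≤ N)
  have hsum : mfZ N x ≤ N * exp (N * pMD x + (1 + log N)) := by
    rw [mfZ_eq_sum_mfTerm]
    refine (sum_le_card_nsmul _ _ _ hterm).trans ?_
    rw [card_range, nsmul_eq_mul]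
    gcongr
  have := log_le_log (mfZ_pos hN hx) hsum
  rw [log_mul (by positivity) (exp_ne_zero _), log_exp] at this
  linarith

lemma le_log_mfZ {N d : ℕ} {x : ℝ} (hN : 0 < N) (hd : 2 * d ≤ N) (hx : 0 < x) :
    N * mdTrialPressure x (d / N) - 2 * (1 + log N) ≤ log (mfZ N x) := by
  have hsingle : mfTerm N d x ≤ mfZ N x := by
    rw [mfZ_eq_sum_mfTerm]
    exact single_le_sum (fun i _ => (mfTerm_pos hN hx i).le) (by rw [mem_range]; omega)
  have hlog := log_le_log (mfTerm_pos hN hx d) hsingle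
  rw [log_mfTerm hN hd hx.ne'] at hlog
  linarith [logFactorialRemainder_nonneg N, logFactorialRemainder_le d,
    logFactorialRemainder_le (N - 2 * d), log_natCast_le_log_natCast (show d ≤ N by omega),
    log_natCast_le_log_natCast (Nat.sub_le N (2 * d))]

/-- for every `x > 0`, `(1/N)·log Z_N(x) → p(x)` as `N → ∞`. -/
theorem stmt6 (x : ℝ) (hx : 0 < x) :
    Filter.Tendsto (fun N : ℕ => Real.log (mfZ N x) / N) Filter.atTop (nhds (pMD x)) := by
  set ε : ℕ → ℝ := fun N => 2 * (1 + log N) / N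
  have hε : Tendsto ε atTop (𝓝 0) := by
    simpa [ε, mul_div_assoc] using tendsto_one_add_log_div_atTop.const_mul 2
  have hdensity : Tendsto (fun N : ℕ => (⌊fMD x * N⌋₊ : ℝ) / N) atTop (𝓝 (fMD x)) :=
    (tendsto_nat_floor_mul_div_atTop (fMD_pos x).le).comp tendsto_natCast_atTop_atTop
  have hlower : Tendsto (fun N : ℕ => mdTrialPressure x (⌊fMD x * N⌋₊ / N) - ε N) atTop
      (𝓝 (pMD x)) := by
    simpa [mdTrialPressure_fMD] using
      (((continuous_mdTrialPressure x).tendsto _).comp hdensity).sub hε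
  have hupper : Tendsto (fun N : ℕ => pMD x + ε N) atTop (𝓝 (pMD x)) := by
    simpa using hε.const_add (pMD x)
  refine tendsto_of_tendsto_of_tendsto_of_le_of_le' hlower hupper ?_ ?_
  · filter_upwards [eventually_gt_atTop 0] with N hN
    rw [le_div_iff₀ (by positivity), sub_mul, div_mul_cancel₀ _ (by positivity)]
    linarith [le_log_mfZ hN (two_mul_floor_fMD_mul_le hx.ne' N) hx]
  · filter_upwards [eventually_gt_atTop 0] with N hN
    rw [div_le_iff₀ (by positivity), add_mul, div_mul_cancel₀ _ (by positivity)]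
    linarith [log_mfZ_le hN hx]
end
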